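/- Define for t ∈ [0,2): u(x,t) = -t/2+1 for x ≤ -t²/4+t-1; u(x,t) = -x/(1-t/2) for -t²/4+t-1 ≤ x ≤ 0; u(x,t) = tx/(t²/2+2) for 0 ≤ x ≤ t²/4+1; u(x,t) = t/2 for x ≥ t²/4+1; and ρ(x,t) = 1/(t²/4+1) for 0 < x ≤ t²/4+1, ρ = 0 otherwise. Then for every t ∈ [0,2), ∫_ℝ (u_x(x,t)² + ρ(x,t)²) dx = 2. -/

import Mathlib

open MeasureTheory

/-- The explicit piecewise-linear `u` from the wave-breaking example. -/
noncomputable def uEx (x t : ℝ) : ℝ :=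
  if x ≤ -t ^ 2 / 4 + t - 1 then -t / 2 + 1
  else if x ≤ 0 then -x / (1 - t / 2)
  else if x ≤ t ^ 2 / 4 + 1 then t * x / (t ^ 2 / 2 + 2)
  else t / 2

/-- The explicit `ρ` from the wave-breaking example. -/
noncomputable def rhoEx (x t : ℝ) : ℝ :=
  if 0 < x ∧ x ≤ t ^ 2 / 4 + 1 then 1 / (t ^ 2 / 4 + 1) else 0

/-!
On each of the four open pieces cut out by `a = -t²/4 + t - 1`, `0` and `b = t²/4 + 1`,
`u(·, t)` is affine, so off these three points `u_x` is the constant slope `0`, `-1/(1 - t/2)`,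
`t/(t²/2 + 2) = t/(2b)` or `0`. As `a = -(1 - t/2)²`, the left ramp contributes
`(1 - t/2)² · (1 - t/2)⁻² = 1`, and the right one `b · (t²/(4b²) + 1/b²) = 1`.
-/

open Set Filter

lemma integrable_indicator_const {α E : Type*} [MeasurableSpace α] [NormedAddCommGroup E]
    {μ : Measure α} {s : Set α} (hs : MeasurableSet s) (hμs : μ s ≠ ⊤) (c : E) :
    Integrable (s.indicator fun _ => c) μ :=
  (integrableOn_const hμs).integrable_indicator hs

lemma deriv_eq_of_eqOn_affine {f : ℝ → ℝ} {s : Set ℝ} {m c x : ℝ} (hs : IsOpen s)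
    (hf : EqOn f (fun y => m * y + c) s) (hx : x ∈ s) : deriv f x = m := by
  rw [(hf.eventuallyEq_of_mem (hs.mem_nhds hx)).deriv_eq]
  simp

lemma uEx_left_break_eq (t : ℝ) : -t ^ 2 / 4 + t - 1 = -(1 - t / 2) ^ 2 := by ring

lemma uEx_left_break_nonpos (t : ℝ) : -t ^ 2 / 4 + t - 1 ≤ 0 := by
  rw [uEx_left_break_eq]; nlinarith [sq_nonneg (1 - t / 2)]

lemma deriv_uEx_of_lt {t x : ℝ} (hx : x < -t ^ 2 / 4 + t - 1) : deriv (uEx · t) x = 0 :=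
  deriv_eq_of_eqOn_affine (c := -t / 2 + 1) isOpen_Iio
    (fun y (hy : y < _) => by simp [uEx, hy.le]) hx

lemma deriv_uEx_of_mem_Ioo_neg {t x : ℝ} (hx : x ∈ Ioo (-t ^ 2 / 4 + t - 1) 0) :
    deriv (uEx · t) x = -1 / (1 - t / 2) :=
  deriv_eq_of_eqOn_affine (c := 0) isOpen_Ioo
    (fun y hy => by simp only [uEx, if_neg (not_le.2 hy.1), if_pos hy.2.le]; ring) hx

lemma deriv_uEx_of_mem_Ioo_pos {t x : ℝ} (hx : x ∈ Ioo 0 (t ^ 2 / 4 + 1)) :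
    deriv (uEx · t) x = t / (t ^ 2 / 2 + 2) :=
  deriv_eq_of_eqOn_affine (c := 0) isOpen_Ioo (fun y hy => by
    simp only [uEx, if_neg (not_le.2 ((uEx_left_break_nonpos t).trans_lt hy.1)),
      if_neg (not_le.2 hy.1), if_pos hy.2.le]; ring) hx

lemma deriv_uEx_of_gt {t x : ℝ} (hx : t ^ 2 / 4 + 1 < x) : deriv (uEx · t) x = 0 :=
  deriv_eq_of_eqOn_affine (c := t / 2) isOpen_Ioi (fun y (hy : _ < y) => by
    have hy0 : 0 < y := by linarith [sq_nonneg t]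
    simp [uEx, not_le.2 hy, not_le.2 hy0, not_le.2 ((uEx_left_break_nonpos t).trans_lt hy0)]) hx

lemma deriv_uEx_sq_ae_eq (t : ℝ) :
    (fun x => deriv (uEx · t) x ^ 2) =ᵐ[volume]
      (Ioo (-t ^ 2 / 4 + t - 1) 0).indicator (fun _ => (1 / (1 - t / 2)) ^ 2)
        + (Ioo 0 (t ^ 2 / 4 + 1)).indicator (fun _ => (t / (t ^ 2 / 2 + 2)) ^ 2) := by
  have hnull : volume ({-t ^ 2 / 4 + t - 1, 0, t ^ 2 / 4 + 1} : Set ℝ) = 0 :=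
    (toFinite _).measure_zero _
  refine eventuallyEq_of_mem (measure_eq_zero_iff_ae_notMem.1 hnull) fun x hx => ?_
  simp only [mem_insert_iff, mem_singleton_iff, not_or] at hx
  obtain ⟨hxa, hx0, hxb⟩ := hx
  rcases lt_or_gt_of_ne hxa with hxa | hxa
  · simp [deriv_uEx_of_lt hxa, hxa.not_gt, not_lt.2 (hxa.le.trans (uEx_left_break_nonpos t))]
  rcases lt_or_gt_of_ne hx0 with hx0 | hx0
  · rw [Pi.add_apply, indicator_of_mem (mem_Ioo.2 ⟨hxa, hx0⟩),
      indicator_of_notMem fun h => hx0.not_gt h.1, deriv_uEx_of_mem_Ioo_neg ⟨hxa, hx0⟩]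
    ring
  rcases lt_or_gt_of_ne hxb with hxb | hxb
  · simp [deriv_uEx_of_mem_Ioo_pos ⟨hx0, hxb⟩, hx0, hxb, hx0.not_gt]
  · simp [deriv_uEx_of_gt hxb, hx0.not_gt, hxb.not_gt]

lemma rhoEx_sq_eq (t : ℝ) :
    (fun x => rhoEx x t ^ 2) =
      (Ioc 0 (t ^ 2 / 4 + 1)).indicator (fun _ => (1 / (t ^ 2 / 4 + 1)) ^ 2) := by
  ext x
  by_cases hx : 0 < x ∧ x ≤ t ^ 2 / 4 + 1 <;> simp [rhoEx, indicator, hx]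

/-- The total energy `∫ (u_x² + ρ²) dx` equals `2` for all `t ∈ [0,2)`. -/
theorem energy_conserved_example :
    ∀ t ∈ Set.Ico (0 : ℝ) 2,
      ∫ x : ℝ, ((deriv (fun x => uEx x t) x) ^ 2 + (rhoEx x t) ^ 2) = 2 := by
  rintro t ⟨-, ht⟩
  have hb : 0 < t ^ 2 / 4 + 1 := by positivity
  have hc : 1 - t / 2 ≠ 0 := by linarith
  have hae : (fun x => deriv (uEx · t) x ^ 2 + rhoEx x t ^ 2) =ᵐ[volume] _ :=
    (deriv_uEx_sq_ae_eq t).add (rhoEx_sq_eq t).eventuallyEq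
  have hIoo (a b c : ℝ) : Integrable ((Ioo a b).indicator fun _ => c) :=
    integrable_indicator_const measurableSet_Ioo measure_Ioo_lt_top.ne c
  have hIoc (a b c : ℝ) : Integrable ((Ioc a b).indicator fun _ => c) :=
    integrable_indicator_const measurableSet_Ioc measure_Ioc_lt_top.ne c
  rw [integral_congr_ae hae, integral_add' ((hIoo ..).add (hIoo ..)) (hIoc ..),
    integral_add' (hIoo ..) (hIoo ..), integral_indicator_const _ measurableSet_Ioo,
    integral_indicator_const _ measurableSet_Ioo, integral_indicator_const _ measurableSet_Ioc,
    Real.volume_real_Ioo_of_le (uEx_left_break_nonpos t), Real.volume_real_Ioo_of_le hb.le,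
    Real.volume_real_Ioc_of_le hb.le, uEx_left_break_eq]
  simp only [smul_eq_mul]
  field_simp
  ring
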